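/- For any basic lattice B, the Stone space B̂ of ≺-ultrafilters (topologized by the sets O_x = {U ∈ B̂ : x ∈ U}) is a locally compact Hausdorff space; moreover O_x ∩ O_y = O_{x∧y}, O_x ∪ O_y = O_{x∨y}, O_x ∩ O_y = ∅ iff x ∧ y = 0, and closure(O_x) ⊆ O_y iff x ≺ y, with closure(O_x) compact for every x. -/

import Mathlib

/-- A basic lattice: a transitive relation `prec` (≺) with minimum `zero`,
whose reflexivization `ple` (⪯) is a lattice order with meet `inf` and join `sup`,
satisfying coinitiality, cofinality, interpolation, multiplicativity, additivity,
decomposition and complementation. -/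
structure BasicLattice (B : Type) where
  prec : B → B → Prop
  zero : B
  inf : B → B → B
  sup : B → B → B
  trans : ∀ {x y z : B}, prec x y → prec y z → prec x z
  min : ∀ x, prec zero x
  antisymm : ∀ x y, (∀ z, prec z x → prec z y) → (∀ z, prec z y → prec z x) → x = y
  inf_le_left : ∀ x y z, prec z (inf x y) → prec z x
  inf_le_right : ∀ x y z, prec z (inf x y) → prec z y
  le_inf : ∀ x y w, (∀ z, prec z w → prec z x) → (∀ z, prec z w → prec z y) →
    ∀ z, prec z w → prec z (inf x y)
  le_sup_left : ∀ x y z, prec z x → prec z (sup x y)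
  le_sup_right : ∀ x y z, prec z y → prec z (sup x y)
  sup_le : ∀ x y w, (∀ z, prec z x → prec z w) → (∀ z, prec z y → prec z w) →
    ∀ z, prec z (sup x y) → prec z w
  coinit : ∀ x, x ≠ zero → ∃ z, z ≠ zero ∧ prec z x
  cofin : ∀ x, ∃ y, prec x y
  interp : ∀ x y, prec x y → ∃ z, prec x z ∧ prec z y
  mult : ∀ x x' y y', prec x x' → prec y y' → prec (inf x y) (inf x' y')
  add : ∀ x x' y y', prec x x' → prec y y' → prec (sup x y) (sup x' y')
  decomp : ∀ x y z, prec z (sup x y) → ∃ x' y', prec x' x ∧ prec y' y ∧ z = sup x' y'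
  compl : ∀ x y z, prec x y → prec y z → ∃ w, inf w x = zero ∧ sup w y = z

/-- The reflexivization ⪯ of ≺. -/
def BasicLattice.ple {B : Type} (L : BasicLattice B) (x y : B) : Prop :=
  ∀ z, L.prec z x → L.prec z y

/-- A ≺-filter: ≻-closed and ≺-directed. -/
def BasicLattice.IsPrecFilter {B : Type} (L : BasicLattice B) (U : Set B) : Prop :=
  (∀ x y, y ∈ U → L.prec y x → x ∈ U) ∧
  (∀ x y, x ∈ U → y ∈ U → ∃ z ∈ U, L.prec z x ∧ L.prec z y)

/-- A ≺-ultrafilter: a maximal proper ≺-filter. -/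
def BasicLattice.IsUltra {B : Type} (L : BasicLattice B) (U : Set B) : Prop :=
  L.IsPrecFilter U ∧ U ≠ Set.univ ∧
  ∀ V, L.IsPrecFilter V → V ≠ Set.univ → U ⊆ V → U = V

/-- The Stone space of a basic lattice: the set of ≺-ultrafilters. -/
def BasicLattice.Spec {B : Type} (L : BasicLattice B) : Type :=
  {U : Set B // L.IsUltra U}

/-- Basic open sets of the Stone space. -/
def BasicLattice.Ox {B : Type} (L : BasicLattice B) (x : B) : Set L.Spec :=
  {U | x ∈ U.1}

/-- The topology on the Stone space, generated by the sets O_x. -/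
instance {B : Type} (L : BasicLattice B) : TopologicalSpace L.Spec :=
  TopologicalSpace.generateFrom {S | ∃ x : B, S = L.Ox x}

/-! Among proper ≺-filters, the ultrafilters `U` are characterised (up to the empty one) by:
if `c ≺ y` and `c` meets every member of `U`, then `y ∈ U`. Hence ultrafilters are prime,
giving `O_x ∪ O_y = O_{x ∨ y}`, and every member of a point of `closure (O_x)` meets `x`, so
`x ≺ y` forces `closure (O_x) ⊆ O_y`.

An ultrafilter `𝓕` of points on `closure (O_x)` converges to the ≺-filter generated by
`{w | O_w ∈ 𝓕}`; the complementation axiom shows that this filter satisfies the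
characterisation, so `closure (O_x)` is compact. Conversely, if `closure (O_x) ⊆ O_y`,
compactness and the directed cover `O_y = ⋃_{u ≺ y} O_u` give `O_x ⊆ O_u` for one `u ≺ y`,
and a complement of `u` then shows `x ≺ y`. -/

namespace BasicLattice

variable {B : Type}

def precUpper (L : BasicLattice B) (S : Set B) : Set B :=
  {r | ∃ q ∈ S, L.prec q r}

variable {L : BasicLattice B}

lemma eq_zero_of_prec_zero {z : B} (h : L.prec z L.zero) : z = L.zero :=
  L.antisymm z L.zero (fun _ hw => L.trans hw h) (fun _ hw => L.trans hw (L.min z))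

lemma eq_zero_of_forall_prec {a : B} (h : ∀ s, L.prec s a → s = L.zero) : a = L.zero :=
  L.antisymm a L.zero (fun s hs => by rw [h s hs]; exact L.min _)
    (fun _ hs => L.trans hs (L.min a))

lemma ple_of_prec {a b : B} (h : L.prec a b) : L.ple a b := fun _ hz => L.trans hz h

lemma sup_comm (a b : B) : L.sup a b = L.sup b a :=
  L.antisymm _ _ (L.sup_le a b _ (L.le_sup_right b a) (L.le_sup_left b a))
    (L.sup_le b a _ (L.le_sup_right a b) (L.le_sup_left a b))

lemma inf_eq_left_of_ple {a b : B} (h : L.ple a b) : L.inf a b = a :=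
  L.antisymm _ _ (L.inf_le_left a b) (L.le_inf a b a (fun _ hz => hz) h)

lemma inf_self (a : B) : L.inf a a = a :=
  inf_eq_left_of_ple fun _ hz => hz

lemma sup_self (a : B) : L.sup a a = a :=
  L.antisymm _ _ (L.sup_le a a a (fun _ hz => hz) (fun _ hz => hz)) (L.le_sup_left a a)

lemma sup_zero (a : B) : L.sup a L.zero = a :=
  L.antisymm _ _ (L.sup_le a L.zero a (fun _ hz => hz) (fun _ hz => L.trans hz (L.min a)))
    (L.le_sup_left a L.zero)

lemma inf_ple_inf_right (c : B) {a b : B} (h : L.ple a b) : L.ple (L.inf a c) (L.inf b c) :=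
  L.le_inf b c _ (fun z hz => h z (L.inf_le_left a c z hz)) (L.inf_le_right a c)

lemma prec_inf {a b c : B} (hb : L.prec a b) (hc : L.prec a c) : L.prec a (L.inf b c) :=
  inf_self a ▸ L.mult a b a c hb hc

lemma sup_prec {a b c : B} (ha : L.prec a c) (hb : L.prec b c) : L.prec (L.sup a b) c :=
  sup_self c ▸ L.add a c b c ha hb

lemma ple_prec {a b c : B} (hab : L.ple a b) (hbc : L.prec b c) : L.prec a c := by
  -- `⪯` is only the reflexivization of `≺`: go through `a = a ∧ b ≺ t ∧ d ⪯ d ≺ c`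
  obtain ⟨t, hat⟩ := L.cofin a
  obtain ⟨d, hbd, hdc⟩ := L.interp b c hbc
  have h := L.mult a t b d hat hbd
  rw [inf_eq_left_of_ple hab] at h
  exact L.trans (L.inf_le_right t d a h) hdc

lemma inf_eq_zero_iff {a b : B} :
    L.inf a b = L.zero ↔ ∀ s, L.prec s a → L.prec s b → s = L.zero :=
  ⟨fun h _ ha hb => eq_zero_of_prec_zero (h ▸ prec_inf ha hb),
    fun h => eq_zero_of_forall_prec fun s hs =>
      h s (L.inf_le_left a b s hs) (L.inf_le_right a b s hs)⟩

lemma inf_eq_zero_of_ple {a b c : B} (hab : L.ple a b) (h : L.inf b c = L.zero) :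
    L.inf a c = L.zero :=
  inf_eq_zero_iff.mpr fun s hsa hsc => inf_eq_zero_iff.mp h s (hab s hsa) hsc

lemma prec_of_prec_sup_of_inf_eq_zero {q r v : B} (hq : L.prec q (L.sup r v))
    (hqv : L.inf q v = L.zero) : L.prec q r := by
  obtain ⟨r', v', hr', hv', rfl⟩ := L.decomp r v q hq
  have hv'0 : v' = L.zero := eq_zero_of_forall_prec fun s hs =>
    inf_eq_zero_iff.mp hqv s (L.le_sup_right r' v' s hs) (L.trans hs hv')
  rwa [hv'0, sup_zero]

lemma exists_prec_inf_eq_zero {c c' u : B} (hc : L.prec c c') (hu : L.inf u c' = L.zero) :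
    ∃ z, L.prec u z ∧ L.inf z c = L.zero := by
  obtain ⟨T, hT⟩ := L.cofin (L.sup u c')
  obtain ⟨z, hzc, hzT⟩ := L.compl c c' T hc (ple_prec (L.le_sup_right u c') hT)
  refine ⟨z, prec_of_prec_sup_of_inf_eq_zero ?_ hu, hzc⟩
  rw [hzT]
  exact ple_prec (L.le_sup_left u c') hT

lemma isPrecFilter_precUpper {S : Set B}
    (hS : ∀ a ∈ S, ∀ b ∈ S, ∃ c ∈ S, L.ple c a ∧ L.ple c b) :
    L.IsPrecFilter (L.precUpper S) := by
  refine ⟨fun r r' ⟨q, hq, hqr'⟩ hr'r => ⟨q, hq, L.trans hqr' hr'r⟩, ?_⟩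
  rintro r₁ r₂ ⟨q₁, hq₁, h₁⟩ ⟨q₂, hq₂, h₂⟩
  obtain ⟨c, hc, hc₁, hc₂⟩ := hS q₁ hq₁ q₂ hq₂
  obtain ⟨ρ, hcρ, hρ⟩ := L.interp _ _ (prec_inf (ple_prec hc₁ h₁) (ple_prec hc₂ h₂))
  exact ⟨ρ, ⟨c, hc, hcρ⟩, L.inf_le_left r₁ r₂ ρ hρ, L.inf_le_right r₁ r₂ ρ hρ⟩

lemma precUpper_ne_univ {S : Set B} (h0 : L.zero ∉ S) : L.precUpper S ≠ Set.univ := by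
  intro h
  obtain ⟨q, hq, hq0⟩ : L.zero ∈ L.precUpper S := h ▸ Set.mem_univ _
  exact h0 (eq_zero_of_prec_zero hq0 ▸ hq)

lemma IsPrecFilter.exists_mem_prec {U : Set B} (hU : L.IsPrecFilter U) {a : B} (ha : a ∈ U) :
    ∃ z ∈ U, L.prec z a :=
  let ⟨z, hz, hza, _⟩ := hU.2 a a ha ha
  ⟨z, hz, hza⟩

lemma IsPrecFilter.zero_notMem {U : Set B} (hU : L.IsPrecFilter U) (hp : U ≠ Set.univ) :
    L.zero ∉ U :=
  fun h0 => hp (Set.eq_univ_of_forall fun w => hU.1 w L.zero h0 (L.min w))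

lemma isPrecFilter_sUnion {c : Set (Set B)} (hc : IsChain (· ⊆ ·) c)
    (h : ∀ V ∈ c, L.IsPrecFilter V) : L.IsPrecFilter (⋃₀ c) := by
  refine ⟨fun r z ⟨V, hV, hzV⟩ hzr => ⟨V, hV, (h V hV).1 r z hzV hzr⟩, ?_⟩
  rintro z₁ z₂ ⟨V₁, hV₁, h₁⟩ ⟨V₂, hV₂, h₂⟩
  obtain ⟨V, hV, h₁V, h₂V⟩ : ∃ V ∈ c, z₁ ∈ V ∧ z₂ ∈ V := by
    rcases hc.total hV₁ hV₂ with h₁₂ | h₂₁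
    · exact ⟨V₂, hV₂, h₁₂ h₁, h₂⟩
    · exact ⟨V₁, hV₁, h₁, h₂₁ h₂⟩
  obtain ⟨w, hw, hw₁, hw₂⟩ := (h V hV).2 z₁ z₂ h₁V h₂V
  exact ⟨w, ⟨V, hV, hw⟩, hw₁, hw₂⟩

lemma sUnion_ne_univ_of_isPrecFilter {c : Set (Set B)}
    (h : ∀ V ∈ c, L.IsPrecFilter V ∧ V ≠ Set.univ) : ⋃₀ c ≠ Set.univ := fun hc =>
  let ⟨V, hV, h0⟩ : L.zero ∈ ⋃₀ c := hc ▸ Set.mem_univ _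
  (h V hV).1.zero_notMem (h V hV).2 h0

lemma exists_isUltra_superset {V : Set B} (hV : L.IsPrecFilter V) (hp : V ≠ Set.univ) :
    ∃ U, L.IsUltra U ∧ V ⊆ U := by
  obtain ⟨U, hVU, hU⟩ := zorn_subset_nonempty {W | L.IsPrecFilter W ∧ W ≠ Set.univ}
    (fun c hcS hc _ => ⟨⋃₀ c, ⟨isPrecFilter_sUnion hc fun W hW => (hcS hW).1,
      sUnion_ne_univ_of_isPrecFilter hcS⟩, fun _ => Set.subset_sUnion_of_mem⟩) V ⟨hV, hp⟩
  exact ⟨U, ⟨hU.prop.1, hU.prop.2, fun W hW hWp hUW => hUW.antisymm (hU.2 ⟨hW, hWp⟩ hUW)⟩,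
    hVU⟩

lemma exists_isUltra_mem {a : B} (ha : a ≠ L.zero) : ∃ U, L.IsUltra U ∧ a ∈ U := by
  obtain ⟨z, hz0, hza⟩ := L.coinit a ha
  obtain ⟨U, hU, hzU⟩ := exists_isUltra_superset (L := L) (V := L.precUpper {z})
    (isPrecFilter_precUpper <| by
      rintro _ rfl _ rfl
      exact ⟨_, rfl, fun _ h => h, fun _ h => h⟩)
    (precUpper_ne_univ fun h => hz0 (Set.mem_singleton_iff.mp h).symm)
  exact ⟨U, hU, hzU ⟨z, rfl, hza⟩⟩

lemma IsUltra.mem_of_prec {U : Set B} (hU : L.IsUltra U) (hne : U.Nonempty) {c y : B}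
    (hcy : L.prec c y) (hc : ∀ u ∈ U, L.inf u c ≠ L.zero) : y ∈ U := by
  set S := (L.inf · c) '' U
  have hS : L.IsPrecFilter (L.precUpper S) := isPrecFilter_precUpper <| by
    rintro _ ⟨u₁, hu₁, rfl⟩ _ ⟨u₂, hu₂, rfl⟩
    obtain ⟨u, hu, h₁, h₂⟩ := hU.1.2 u₁ u₂ hu₁ hu₂
    exact ⟨_, ⟨u, hu, rfl⟩, inf_ple_inf_right c (ple_of_prec h₁),
      inf_ple_inf_right c (ple_of_prec h₂)⟩
  have hUS : U ⊆ L.precUpper S := fun u hu =>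
    let ⟨u', hu', hu'u⟩ := hU.1.exists_mem_prec hu
    ⟨_, ⟨u', hu', rfl⟩, ple_prec (L.inf_le_left u' c) hu'u⟩
  have hSp : L.precUpper S ≠ Set.univ :=
    precUpper_ne_univ fun ⟨u, hu, h0⟩ => hc u hu h0
  rw [hU.2.2 _ hS hSp hUS]
  obtain ⟨u, hu⟩ := hne
  exact ⟨_, ⟨u, hu, rfl⟩, ple_prec (L.inf_le_right u c) hcy⟩

lemma isUltra_of_forall_mem_of_prec {U : Set B} (hU : L.IsPrecFilter U) (hp : U ≠ Set.univ)
    (h : ∀ c y, L.prec c y → (∀ u ∈ U, L.inf u c ≠ L.zero) → y ∈ U) :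
    L.IsUltra U := by
  refine ⟨hU, hp, fun V hV hVp hUV => hUV.antisymm fun v hv => ?_⟩
  obtain ⟨v', hv', hv'v⟩ := hV.exists_mem_prec hv
  refine h v' v hv'v fun u hu h0 => hV.zero_notMem hVp ?_
  obtain ⟨s, hs, hsu, hsv'⟩ := hV.2 u v' (hUV hu) hv'
  exact inf_eq_zero_iff.mp h0 s hsu hsv' ▸ hs

lemma IsUltra.mem_or_mem_of_sup_mem {U : Set B} (hU : L.IsUltra U) {a b : B}
    (hab : L.sup a b ∈ U) : a ∈ U ∨ b ∈ U := by
  by_contra! h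
  obtain ⟨z, hz, hzab⟩ := hU.1.exists_mem_prec hab
  obtain ⟨a', b', ha', hb', rfl⟩ := L.decomp a b z hzab
  have hmiss : ∀ {c d}, L.prec c d → d ∉ U → ∃ u ∈ U, L.inf u c = L.zero := by
    intro c d hcd hd
    by_contra! hc
    exact hd (hU.mem_of_prec ⟨_, hz⟩ hcd hc)
  obtain ⟨u₁, hu₁, h₁⟩ := hmiss ha' h.1
  obtain ⟨u₂, hu₂, h₂⟩ := hmiss hb' h.2
  obtain ⟨u₃, hu₃, hu₃₁, hu₃₂⟩ := hU.1.2 u₁ u₂ hu₁ hu₂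
  obtain ⟨u, hu, huz, huu₃⟩ := hU.1.2 _ u₃ hz hu₃
  have hua' : L.prec u a' := prec_of_prec_sup_of_inf_eq_zero huz
    (inf_eq_zero_of_ple (ple_of_prec (L.trans huu₃ hu₃₂)) h₂)
  exact hU.1.zero_notMem hU.2.1 (inf_eq_zero_iff.mp h₁ u (L.trans huu₃ hu₃₁) hua' ▸ hu)

lemma Spec.eq_of_subset {U V : L.Spec} (h : U.1 ⊆ V.1) : U = V :=
  Subtype.ext (U.2.2.2 V.1 V.2.1 V.2.2.1 h)

lemma isOpen_Ox (x : B) : IsOpen (L.Ox x) :=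
  TopologicalSpace.isOpen_generateFrom_of_mem ⟨x, rfl⟩

lemma Ox_mono {a b : B} (h : L.ple a b) : L.Ox a ⊆ L.Ox b := fun U ha =>
  let ⟨z, hz, hza⟩ := U.2.1.exists_mem_prec ha
  U.2.1.1 b z hz (h z hza)

lemma Ox_inf (a b : B) : L.Ox a ∩ L.Ox b = L.Ox (L.inf a b) := by
  refine subset_antisymm (fun U ⟨ha, hb⟩ => ?_) fun U h =>
    ⟨Ox_mono (L.inf_le_left a b) h, Ox_mono (L.inf_le_right a b) h⟩
  obtain ⟨z, hz, hza, hzb⟩ := U.2.1.2 a b ha hb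
  exact U.2.1.1 _ z hz (prec_inf hza hzb)

lemma Ox_zero : L.Ox L.zero = ∅ :=
  Set.eq_empty_of_forall_notMem fun U => U.2.1.zero_notMem U.2.2.1

lemma Ox_eq_empty_iff {a : B} : L.Ox a = ∅ ↔ a = L.zero := by
  refine ⟨fun h => by_contra fun ha => ?_, fun h => h ▸ Ox_zero⟩
  obtain ⟨U, hU, haU⟩ := exists_isUltra_mem ha
  exact h.subset (show (⟨U, hU⟩ : L.Spec) ∈ L.Ox a from haU)

lemma Ox_sup (a b : B) : L.Ox a ∪ L.Ox b = L.Ox (L.sup a b) :=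
  subset_antisymm
    (Set.union_subset (Ox_mono (L.le_sup_left a b)) (Ox_mono (L.le_sup_right a b)))
    fun U h => U.2.mem_or_mem_of_sup_mem h

lemma Ox_inter_eq_empty_iff {a b : B} : L.Ox a ∩ L.Ox b = ∅ ↔ L.inf a b = L.zero := by
  rw [Ox_inf, Ox_eq_empty_iff]

lemma Ox_eq_iUnion_prec (y : B) : L.Ox y = ⋃ u : {u // L.prec u y}, L.Ox u.1 := by
  refine subset_antisymm (fun U hy => ?_)
    (Set.iUnion_subset fun u => Ox_mono (ple_of_prec u.2))
  obtain ⟨u, hu, huy⟩ := U.2.1.exists_mem_prec hy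
  exact Set.mem_iUnion.mpr ⟨⟨u, huy⟩, hu⟩

lemma inf_ne_zero_of_mem_closure_Ox {x u : B} {U : L.Spec} (hU : U ∈ closure (L.Ox x))
    (hu : u ∈ U.1) : L.inf u x ≠ L.zero := by
  rw [Ne, ← Ox_inter_eq_empty_iff, ← Ne, ← Set.nonempty_iff_ne_empty]
  exact mem_closure_iff.mp hU _ (isOpen_Ox u) hu

lemma closure_Ox_subset {x y : B} (h : L.prec x y) : closure (L.Ox x) ⊆ L.Ox y := by
  intro U hU
  obtain ⟨V, hV⟩ := closure_nonempty_iff.mp ⟨U, hU⟩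
  have hne : U.1.Nonempty := by
    rcases U.1.eq_empty_or_nonempty with hU | hne
    · exact ⟨x, Spec.eq_of_subset (hU ▸ V.1.empty_subset) ▸ hV⟩
    · exact hne
  exact U.2.mem_of_prec hne h fun u hu => inf_ne_zero_of_mem_closure_Ox hU hu

lemma prec_of_Ox_subset {x u y : B} (h : L.Ox x ⊆ L.Ox u) (huy : L.prec u y) : L.prec x y := by
  obtain ⟨u', huu', hu'y⟩ := L.interp u y huy
  obtain ⟨T, hT⟩ := L.cofin (L.sup x y)
  obtain ⟨w, hwu, hwT⟩ :=
    L.compl u u' T huu' (L.trans hu'y (ple_prec (L.le_sup_right x y) hT))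
  -- the complement `w` of `u` misses `x` as `O_x ⊆ O_u`, so `x ≺ u' ∨ w` forces `x ≺ u'`
  have hxw : L.inf x w = L.zero := by
    rw [← Ox_inter_eq_empty_iff, ← Set.subset_empty_iff, ← Ox_zero, ← hwu, ← Ox_inf,
      Set.inter_comm]
    exact Set.inter_subset_inter_right _ h
  have hxT : L.prec x (L.sup u' w) := by
    rw [sup_comm, hwT]
    exact ple_prec (L.le_sup_left x y) hT
  exact L.trans (prec_of_prec_sup_of_inf_eq_zero hxT hxw) hu'y

lemma le_nhds_of_forall_Ox_mem {f : Filter L.Spec} {U : L.Spec}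
    (h : ∀ c ∈ U.1, L.Ox c ∈ f) : f ≤ nhds U := by
  rw [TopologicalSpace.nhds_generateFrom]
  refine le_iInf₂ fun s ⟨hUs, c, hc⟩ => ?_
  subst hc
  exact Filter.le_principal_iff.mpr (h c hUs)

lemma isUltra_precUpper_of_closure_mem {f : Ultrafilter L.Spec} {x : B}
    (hxf : closure (L.Ox x) ∈ f) : L.IsUltra (L.precUpper {w | L.Ox w ∈ f}) := by
  have hM : L.IsPrecFilter (L.precUpper {w | L.Ox w ∈ f}) :=
    isPrecFilter_precUpper fun a ha b hb =>
      ⟨L.inf a b, show L.Ox (L.inf a b) ∈ f from Ox_inf a b ▸ Filter.inter_mem ha hb,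
        L.inf_le_left a b, L.inf_le_right a b⟩
  have hp : L.precUpper {w | L.Ox w ∈ f} ≠ Set.univ :=
    precUpper_ne_univ fun h0 => f.empty_notMem (Ox_zero (L := L) ▸ h0)
  refine isUltra_of_forall_mem_of_prec hM hp fun c y hcy hc => ?_
  obtain ⟨c₁, hcc₁, hc₁y⟩ := L.interp c y hcy
  obtain ⟨c₂, hc₁c₂, hc₂y⟩ := L.interp c₁ y hc₁y
  refine ⟨c₂, ?_, hc₂y⟩
  -- Otherwise `f` lives on `closure (O_x) \ O_{c₂} ⊆ O_u` for a complement `u` of `c₁`,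
  -- and `u` lies below a member of the filter disjoint from `c`.
  by_contra hc₂
  obtain ⟨T, hT⟩ := L.cofin (L.sup x c₂)
  obtain ⟨u, hu, huT⟩ := L.compl c₁ c₂ T hc₁c₂ (ple_prec (L.le_sup_right x c₂) hT)
  have huf : L.Ox u ∈ f := by
    refine Filter.mem_of_superset (Filter.inter_mem hxf (f.compl_mem_iff_notMem.mpr hc₂)) ?_
    rintro V ⟨hV, hVc₂⟩
    have hVT : V ∈ L.Ox u ∪ L.Ox c₂ := by
      rw [Ox_sup, huT]
      exact closure_Ox_subset (ple_prec (L.le_sup_left x c₂) hT) hV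
    exact hVT.resolve_right hVc₂
  obtain ⟨z, huz, hzc⟩ := exists_prec_inf_eq_zero hcc₁ hu
  exact hc z ⟨u, huf, huz⟩ hzc

lemma isCompact_closure_Ox (x : B) : IsCompact (closure (L.Ox x)) := by
  rw [isCompact_iff_ultrafilter_le_nhds]
  intro f hf
  have hxf : closure (L.Ox x) ∈ f := Filter.le_principal_iff.mp hf
  have hfM : (f : Filter L.Spec) ≤ nhds ⟨_, isUltra_precUpper_of_closure_mem hxf⟩ :=
    le_nhds_of_forall_Ox_mem fun _ ⟨w, hw, hwc⟩ =>
      Filter.mem_of_superset hw (Ox_mono (ple_of_prec hwc))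
  have hM : _ ∈ closure (closure (L.Ox x)) := mem_closure_iff_ultrafilter.mpr ⟨f, hxf, hfM⟩
  exact ⟨_, closure_closure (s := L.Ox x) ▸ hM, hfM⟩

lemma prec_of_closure_Ox_subset {x y : B} (h : closure (L.Ox x) ⊆ L.Ox y) : L.prec x y := by
  have : Nonempty {u // L.prec u y} := ⟨⟨L.zero, L.min y⟩⟩
  obtain ⟨⟨u, huy⟩, hu⟩ := (isCompact_closure_Ox x).elim_directed_cover
    (fun u : {u // L.prec u y} => L.Ox u.1) (fun u => isOpen_Ox u.1)
    (h.trans (Ox_eq_iUnion_prec y).subset) fun ⟨u₁, h₁⟩ ⟨u₂, h₂⟩ =>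
      ⟨⟨_, sup_prec h₁ h₂⟩, Ox_mono (L.le_sup_left u₁ u₂),
        Ox_mono (L.le_sup_right u₁ u₂)⟩
  exact prec_of_Ox_subset (subset_closure.trans hu) huy

instance : T2Space L.Spec := by
  refine ⟨fun U V hUV => ?_⟩
  obtain ⟨a, haU, haV⟩ := Set.not_subset.mp fun h => hUV (Spec.eq_of_subset h)
  obtain ⟨a₁, ha₁U, ha₁a⟩ := U.2.1.exists_mem_prec haU
  exact ⟨L.Ox a₁, (closure (L.Ox a₁))ᶜ, isOpen_Ox a₁, isClosed_closure.isOpen_compl,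
    ha₁U, fun hV => haV (closure_Ox_subset ha₁a hV),
    disjoint_compl_right.mono_left subset_closure⟩

instance : WeaklyLocallyCompactSpace L.Spec := by
  refine ⟨fun U => ?_⟩
  rcases U.1.eq_empty_or_nonempty with hU | ⟨u, hu⟩
  · -- possible only when `B = {0}`, and then `U` is the only point
    have hall : ∀ V : L.Spec, U = V := fun V => Spec.eq_of_subset (hU ▸ V.1.empty_subset)
    have huniv : (Set.univ : Set L.Spec).Subsingleton := fun V _ W _ =>
      (hall V).symm.trans (hall W)
    exact ⟨Set.univ, huniv.isCompact, Filter.univ_mem⟩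
  · exact ⟨closure (L.Ox u), isCompact_closure_Ox u,
      Filter.mem_of_superset ((isOpen_Ox u).mem_nhds hu) subset_closure⟩

end BasicLattice

/-- For any basic lattice B, the Stone space of ≺-ultrafilters is locally compact
Hausdorff, with O_x ∩ O_y = O_{x ∧ y}, O_x ∪ O_y = O_{x ∨ y}, disjointness of
O_x, O_y equivalent to x ∧ y = 0, compact containment closure(O_x) ⊆ O_y
equivalent to x ≺ y, and each closure(O_x) compact. -/
theorem basicLattice_stone_space {B : Type} (L : BasicLattice B) :
    LocallyCompactSpace L.Spec ∧ T2Space L.Spec ∧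
    (∀ x y : B, L.Ox x ∩ L.Ox y = L.Ox (L.inf x y)) ∧
    (∀ x y : B, L.Ox x ∪ L.Ox y = L.Ox (L.sup x y)) ∧
    (∀ x y : B, (L.Ox x ∩ L.Ox y = ∅ ↔ L.inf x y = L.zero)) ∧
    (∀ x y : B, (closure (L.Ox x) ⊆ L.Ox y ↔ L.prec x y)) ∧
    (∀ x : B, IsCompact (closure (L.Ox x))) :=
  ⟨inferInstance, inferInstance, BasicLattice.Ox_inf, BasicLattice.Ox_sup,
    fun _ _ => BasicLattice.Ox_inter_eq_empty_iff,
    fun _ _ => ⟨BasicLattice.prec_of_closure_Ox_subset, BasicLattice.closure_Ox_subset⟩,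
    BasicLattice.isCompact_closure_Ox⟩
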